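/- Let G be a weighted bipartite graph between finite vertex sets V and W, let 𝒮 be a partition of V and 𝒯 a partition of W into nonempty parts, and let R ⊆ 𝒮 × 𝒯. Suppose that for each pair (S,T) ∈ R we are given subsets S_T^0, S_T^1 ⊆ S and T_S^0, T_S^1 ⊆ T with S_T^1, T_S^1 nonempty and |S_T^0||T_S^0| ≤ |S_T^1||T_S^1|. Then Σ_{S ∈ 𝒮, T ∈ 𝒯} irreg_G(S,T) ≥ (1/2)·Σ_{(S,T) ∈ R} |e_G(S_T^0, T_S^0) − (|S_T^0||T_S^0|/(|S_T^1||T_S^1|))·e_G(S_T^1, T_S^1)|. -/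

import Mathlib

open Finset

/-- The sum of weights over ordered pairs in `A × B` in a weighted graph `w`. -/
def weightSum {V : Type*} (w : V → V → ℝ) (A B : Finset V) : ℝ :=
  ∑ x ∈ A, ∑ y ∈ B, w x y

/-- The weighted edge density between `X` and `Y`. -/
noncomputable def wDensity {V : Type*} (w : V → V → ℝ) (X Y : Finset V) : ℝ :=
  weightSum w X Y / ((X.card : ℝ) * (Y.card : ℝ))

/-- The irregularity of the pair `X, Y` in a weighted graph `w`. -/
noncomputable def wIrregPair {V : Type*} [DecidableEq V] (w : V → V → ℝ)
    (X Y : Finset V) : ℝ :=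
  (X.powerset ×ˢ Y.powerset).sup'
    ⟨(∅, ∅), by simp⟩
    (fun UW => |weightSum w UW.1 UW.2 - (UW.1.card : ℝ) * (UW.2.card : ℝ) * wDensity w X Y|)

/-- The irregularity of a vertex partition in a weighted graph `w`. -/
noncomputable def wIrregPartition {V : Type*} [DecidableEq V] (w : V → V → ℝ)
    (P : Finset (Finset V)) : ℝ :=
  ∑ X ∈ P, ∑ Y ∈ P, wIrregPair w X Y

/-- `P` is a partition of the vertex set into nonempty parts. -/
def IsPartition {V : Type*} [Fintype V] [DecidableEq V] (P : Finset (Finset V)) : Prop :=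
  (∀ p ∈ P, p.Nonempty) ∧ (∀ p ∈ P, ∀ q ∈ P, p ≠ q → Disjoint p q) ∧
    P.biUnion id = Finset.univ

/-- `P` is a partition of the finite vertex set `A` into nonempty parts. -/
def IsPartitionOn {V : Type*} [DecidableEq V] (A : Finset V) (P : Finset (Finset V)) : Prop :=
  (∀ p ∈ P, p.Nonempty) ∧ (∀ p ∈ P, ∀ q ∈ P, p ≠ q → Disjoint p q) ∧
    P.biUnion id = A


/-
Fix `(S, T) ∈ R`, and let `d = d(S, T)` and `c = |S⁰||T⁰| / (|S¹||T¹|) ≤ 1`.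
Since `c |S¹||T¹| = |S⁰||T⁰|`, the discrepancy `e(S⁰, T⁰) - c e(S¹, T¹)` equals
`(e(S⁰, T⁰) - |S⁰||T⁰| d) - c (e(S¹, T¹) - |S¹||T¹| d)`, and both brackets are bounded by
`irreg(S, T)` because `S⁰, S¹ ⊆ S` and `T⁰, T¹ ⊆ T`. Summing over `R ⊆ 𝒮 × 𝒯` and using
that irregularities are nonnegative gives the claim. If `|S¹||T¹| = 0`, then `c = 0` (division
by zero) but also `|S⁰||T⁰| = 0`, so the discrepancy is `e(S⁰, T⁰) = 0`.
-/

theorem abs_sub_div_mul_le_two_mul {α : Type*} [Field α] [LinearOrder α] [IsStrictOrderedRing α]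
    {a b d x y ε : α} (ha : 0 ≤ a) (hab : a ≤ b) (hx : |x - a * d| ≤ ε) (hy : |y - b * d| ≤ ε) :
    |x - a / b * y| ≤ 2 * ε := by
  have hε : 0 ≤ ε := (abs_nonneg _).trans hy
  rcases (ha.trans hab).eq_or_lt with rfl | hb
  · obtain rfl : a = 0 := le_antisymm hab ha
    simp only [sub_zero, zero_div, zero_mul] at hx ⊢
    linarith
  have hc0 : 0 ≤ a / b := div_nonneg ha hb.le
  have hc1 : a / b ≤ 1 := (div_le_one hb).2 hab
  have hsplit : x - a / b * y = (x - a * d) - a / b * (y - b * d) := by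
    field_simp
    ring
  calc |x - a / b * y| ≤ |x - a * d| + a / b * |y - b * d| := by
        rw [hsplit]
        exact (abs_sub _ _).trans_eq (by rw [abs_mul, abs_of_nonneg hc0])
    _ ≤ ε + (1 : α) * ε := by gcongr
    _ = 2 * ε := by ring

section

variable {V : Type*} [DecidableEq V] (w : V → V → ℝ)

theorem abs_weightSum_sub_le_wIrregPair {X Y A B : Finset V} (hA : A ⊆ X) (hB : B ⊆ Y) :
    |weightSum w A B - (A.card : ℝ) * (B.card : ℝ) * wDensity w X Y| ≤ wIrregPair w X Y := by
  have hmem : (A, B) ∈ X.powerset ×ˢ Y.powerset :=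
    mem_product.2 ⟨mem_powerset.2 hA, mem_powerset.2 hB⟩
  exact le_sup' (fun UW => |weightSum w UW.1 UW.2 -
    (UW.1.card : ℝ) * (UW.2.card : ℝ) * wDensity w X Y|) hmem

theorem wIrregPair_nonneg (X Y : Finset V) : 0 ≤ wIrregPair w X Y :=
  (abs_nonneg _).trans <| abs_weightSum_sub_le_wIrregPair w (empty_subset X) (empty_subset Y)

theorem abs_weightSum_sub_rescaled_le_two_mul_wIrregPair {X Y A₀ B₀ A₁ B₁ : Finset V}
    (hA₀ : A₀ ⊆ X) (hB₀ : B₀ ⊆ Y) (hA₁ : A₁ ⊆ X) (hB₁ : B₁ ⊆ Y)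
    (hcard : A₀.card * B₀.card ≤ A₁.card * B₁.card) :
    |weightSum w A₀ B₀ - ((A₀.card : ℝ) * (B₀.card : ℝ)) / ((A₁.card : ℝ) * (B₁.card : ℝ)) *
        weightSum w A₁ B₁| ≤ 2 * wIrregPair w X Y :=
  abs_sub_div_mul_le_two_mul (by positivity) (by exact_mod_cast hcard)
    (abs_weightSum_sub_le_wIrregPair w hA₀ hB₀) (abs_weightSum_sub_le_wIrregPair w hA₁ hB₁)

end

theorem irreg_between_partitions_ge_general {U : Type*} [DecidableEq U]
    (w : U → U → ℝ)
    (𝒮 𝒯 : Finset (Finset U))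
    (R : Finset (Finset U × Finset U)) (hR : R ⊆ 𝒮 ×ˢ 𝒯)
    (S0 S1 T0 T1 : Finset U × Finset U → Finset U)
    (hS0 : ∀ p ∈ R, S0 p ⊆ p.1) (hS1 : ∀ p ∈ R, S1 p ⊆ p.1)
    (hT0 : ∀ p ∈ R, T0 p ⊆ p.2) (hT1 : ∀ p ∈ R, T1 p ⊆ p.2)
    (hcard : ∀ p ∈ R, (S0 p).card * (T0 p).card ≤ (S1 p).card * (T1 p).card) :
    (1 / 2) * ∑ p ∈ R, |weightSum w (S0 p) (T0 p) -
        (((S0 p).card : ℝ) * ((T0 p).card : ℝ)) /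
            (((S1 p).card : ℝ) * ((T1 p).card : ℝ)) * weightSum w (S1 p) (T1 p)| ≤
      ∑ S ∈ 𝒮, ∑ T ∈ 𝒯, wIrregPair w S T := by
  calc _ ≤ (1 / 2) * ∑ p ∈ R, 2 * wIrregPair w p.1 p.2 := by
        gcongr with p hp
        exact abs_weightSum_sub_rescaled_le_two_mul_wIrregPair w (hS0 p hp) (hT0 p hp)
          (hS1 p hp) (hT1 p hp) (hcard p hp)
    _ = ∑ p ∈ R, wIrregPair w p.1 p.2 := by
        rw [← mul_sum, ← mul_assoc]
        norm_num
    _ ≤ ∑ p ∈ 𝒮 ×ˢ 𝒯, wIrregPair w p.1 p.2 :=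
        sum_le_sum_of_subset_of_nonneg hR fun p _ _ => wIrregPair_nonneg w p.1 p.2
    _ = ∑ S ∈ 𝒮, ∑ T ∈ 𝒯, wIrregPair w S T := sum_product 𝒮 𝒯 _

/-- Collecting discrepancies over a family `R` of pairs of parts bounds the total
irregularity between partitions `𝒮` of `V` and `𝒯` of `W` of a bipartite weighted
graph from below. -/
theorem irreg_between_partitions_ge {U : Type*} [Fintype U] [DecidableEq U]
    (w : U → U → ℝ) (hsymm : ∀ x y, w x y = w y x) (h0 : ∀ x y, 0 ≤ w x y)
    (h1 : ∀ x y, w x y ≤ 1)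
    (V W : Finset U) (hdisj : Disjoint V W) (hcover : V ∪ W = Finset.univ)
    (hbip : ∀ x y, (x ∈ V ∧ y ∈ V) ∨ (x ∈ W ∧ y ∈ W) → w x y = 0)
    (𝒮 𝒯 : Finset (Finset U)) (h𝒮 : IsPartitionOn V 𝒮) (h𝒯 : IsPartitionOn W 𝒯)
    (R : Finset (Finset U × Finset U)) (hR : R ⊆ 𝒮 ×ˢ 𝒯)
    (S0 S1 T0 T1 : Finset U × Finset U → Finset U)
    (hS0 : ∀ p ∈ R, S0 p ⊆ p.1) (hS1 : ∀ p ∈ R, S1 p ⊆ p.1)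
    (hT0 : ∀ p ∈ R, T0 p ⊆ p.2) (hT1 : ∀ p ∈ R, T1 p ⊆ p.2)
    (hS1ne : ∀ p ∈ R, (S1 p).Nonempty) (hT1ne : ∀ p ∈ R, (T1 p).Nonempty)
    (hcard : ∀ p ∈ R, (S0 p).card * (T0 p).card ≤ (S1 p).card * (T1 p).card) :
    (1 / 2) * ∑ p ∈ R, |weightSum w (S0 p) (T0 p) -
        (((S0 p).card : ℝ) * ((T0 p).card : ℝ)) /
            (((S1 p).card : ℝ) * ((T1 p).card : ℝ)) * weightSum w (S1 p) (T1 p)| ≤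
      ∑ S ∈ 𝒮, ∑ T ∈ 𝒯, wIrregPair w S T :=
  irreg_between_partitions_ge_general w 𝒮 𝒯 R hR S0 S1 T0 T1 hS0 hS1 hT0 hT1 hcard
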